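/- Let E = ℝᵐ and F = ℝⁿ with their standard inner products, let f : E × F → ℝ be twice continuously differentiable on a neighborhood 𝒩 = 𝒩ₓ × 𝒩ᵧ of a point (x₀, y₀), and define Q : E × F → F by Q(x, y) = ∇ᵧ f(x, y) (the gradient of f(x, ·) at y). Assume: (C1) there is a function g : 𝒩ₓ → 𝒩ᵧ such that for each x ∈ 𝒩ₓ, g(x) is the unique local minimizer of f(x, ·) in 𝒩ᵧ; (C2) y₀ is a local minimizer of f(x₀, ·), i.e. g(x₀) = y₀; (C3) the Hessian B = ∇ᵧ² f(x₀, y₀) : F → F (the derivative of Q(x₀, ·) at y₀) is positive definite, hence non-degenerate. Let A = ∂ₓQ(x₀, y₀) : E → F be the derivative of Q(·, y₀) at x₀. Then for every g₀ ∈ F, the function G(x) = ½‖g(x) − g₀‖₂² is differentiable at x₀ and its gradient at x₀ equals −A*(B⁻¹(g(x₀) − g₀)), where A* : F → E is the adjoint of A. -/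

import Mathlib

open scoped RealInnerProductSpace


noncomputable def dualIso (F : Type*) [NormedAddCommGroup F] [InnerProductSpace ℝ F]
    [CompleteSpace F] : (F →L[ℝ] ℝ) ≃L[ℝ] F :=
{ toFun := fun d => (InnerProductSpace.toDual ℝ F).symm d
  invFun := fun v => InnerProductSpace.toDual ℝ F v
  map_add' := fun d₁ d₂ => by simp
  map_smul' := fun r d => by simp
  left_inv := fun d => by simp
  right_inv := fun v => by simp
  continuous_toFun := (InnerProductSpace.toDual ℝ F).symm.continuous
  continuous_invFun := (InnerProductSpace.toDual ℝ F).continuous }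

lemma dualIso_inner {F : Type*} [NormedAddCommGroup F] [InnerProductSpace ℝ F]
    [CompleteSpace F] (d : F →L[ℝ] ℝ) (v : F) : ⟪dualIso F d, v⟫ = d v :=
  InnerProductSpace.toDual_symm_apply

lemma dualIso_symm_apply {F : Type*} [NormedAddCommGroup F] [InnerProductSpace ℝ F]
    [CompleteSpace F] (u v : F) : (dualIso F).symm u v = ⟪u, v⟫ := rfl

lemma coercive {n : ℕ} (B : EuclideanSpace ℝ (Fin n) →L[ℝ] EuclideanSpace ℝ (Fin n))
    (hBpos : ∀ v : EuclideanSpace ℝ (Fin n), v ≠ 0 → 0 < ⟪v, B v⟫) :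
    ∃ c > 0, ∀ v : EuclideanSpace ℝ (Fin n), c * ‖v‖ ^ 2 ≤ ⟪v, B v⟫ := by
  by_cases hs : ∃ v : EuclideanSpace ℝ (Fin n), v ≠ 0
  · obtain ⟨v₀, hv₀⟩ := hs
    have hsne : (Metric.sphere (0 : EuclideanSpace ℝ (Fin n)) 1).Nonempty :=
      ⟨‖v₀‖⁻¹ • v₀, by simp [norm_smul, norm_ne_zero_iff.2 hv₀, inv_mul_cancel₀]⟩
    have hcont : Continuous fun v : EuclideanSpace ℝ (Fin n) => ⟪v, B v⟫ :=
      continuous_id.inner (B.continuous)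
    obtain ⟨u₀, hu₀, hmin⟩ :=
      (isCompact_sphere (0 : EuclideanSpace ℝ (Fin n)) 1).exists_isMinOn hsne
        hcont.continuousOn
    have hu₀n : ‖u₀‖ = 1 := mem_sphere_zero_iff_norm.1 hu₀
    have hu₀ne : u₀ ≠ 0 := by intro h; rw [h] at hu₀n; simp at hu₀n
    refine ⟨⟪u₀, B u₀⟫, hBpos u₀ hu₀ne, fun v => ?_⟩
    rcases eq_or_ne v 0 with rfl | hv
    · simp
    · have hvn : ‖v‖ ≠ 0 := norm_ne_zero_iff.2 hv
      set u : EuclideanSpace ℝ (Fin n) := ‖v‖⁻¹ • v with hu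
      have hun : u ∈ Metric.sphere (0 : EuclideanSpace ℝ (Fin n)) 1 := by
        simp [hu, norm_smul, inv_mul_cancel₀ hvn, abs_of_nonneg (norm_nonneg v)]
      have h1 : ⟪u₀, B u₀⟫ ≤ ⟪u, B u⟫ := hmin hun
      have h2 : ⟪u, B u⟫ = (‖v‖ ^ 2)⁻¹ * ⟪v, B v⟫ := by
        rw [hu, map_smul, real_inner_smul_left, real_inner_smul_right]
        ring
      have h3 : (0:ℝ) < ‖v‖ ^ 2 := by positivity
      rw [h2] at h1
      calc ⟪u₀, B u₀⟫ * ‖v‖ ^ 2 ≤ (‖v‖ ^ 2)⁻¹ * ⟪v, B v⟫ * ‖v‖ ^ 2 := by nlinarith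
        _ = ⟪v, B v⟫ := by field_simp
  · push_neg at hs
    exact ⟨1, one_pos, fun v => by simp [hs v]⟩

lemma psd_perturb {n : ℕ} (B H : EuclideanSpace ℝ (Fin n) →L[ℝ] EuclideanSpace ℝ (Fin n))
    {c : ℝ} (hcoer : ∀ v : EuclideanSpace ℝ (Fin n), c * ‖v‖ ^ 2 ≤ ⟪v, B v⟫)
    (hn : ‖H - B‖ ≤ c) (v : EuclideanSpace ℝ (Fin n)) : 0 ≤ ⟪v, H v⟫ := by
  have e1 : H v = B v + (H - B) v := by simp
  have e2 := hcoer v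
  have e3 : |⟪v, (H - B) v⟫| ≤ ‖v‖ * ‖(H - B) v‖ := abs_real_inner_le_norm _ _
  have e5 : -(‖v‖ * ‖(H - B) v‖) ≤ ⟪v, (H - B) v⟫ := neg_le_of_abs_le e3
  have e4 : ‖(H - B) v‖ ≤ ‖H - B‖ * ‖v‖ := (H - B).le_opNorm v
  have e6 : ‖H - B‖ * ‖v‖ ≤ c * ‖v‖ := mul_le_mul_of_nonneg_right hn (norm_nonneg v)
  have e8 : ‖v‖ * ‖(H - B) v‖ ≤ ‖v‖ * (c * ‖v‖) :=
    mul_le_mul_of_nonneg_left (e4.trans e6) (norm_nonneg v)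
  have e7 : ‖v‖ ^ 2 = ‖v‖ * ‖v‖ := by ring
  rw [e1, inner_add_right]
  nlinarith [e2, e5, e8, e7]


lemma secondOrderMin {m n : ℕ}
    (f : EuclideanSpace ℝ (Fin m) × EuclideanSpace ℝ (Fin n) → ℝ)
    (Q₂ : EuclideanSpace ℝ (Fin m) × EuclideanSpace ℝ (Fin n) → EuclideanSpace ℝ (Fin n))
    (Df : EuclideanSpace ℝ (Fin m) × EuclideanSpace ℝ (Fin n) →
      (EuclideanSpace ℝ (Fin m) × EuclideanSpace ℝ (Fin n) →L[ℝ] ℝ))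
    (DQ : EuclideanSpace ℝ (Fin m) × EuclideanSpace ℝ (Fin n) →
      (EuclideanSpace ℝ (Fin m) × EuclideanSpace ℝ (Fin n) →L[ℝ] EuclideanSpace ℝ (Fin n)))
    (p₀ : EuclideanSpace ℝ (Fin m) × EuclideanSpace ℝ (Fin n)) (ρ : ℝ)
    (hDf : ∀ p ∈ Metric.ball p₀ ρ, HasFDerivAt f (Df p) p)
    (hQf : ∀ p ∈ Metric.ball p₀ ρ, ∀ v, ⟪Q₂ p, v⟫ = Df p (0, v))
    (hDQ : ∀ p ∈ Metric.ball p₀ ρ, HasFDerivAt Q₂ (DQ p) p)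
    (hPSD : ∀ p ∈ Metric.ball p₀ ρ, ∀ v : EuclideanSpace ℝ (Fin n),
      0 ≤ ⟪v, DQ p (0, v)⟫)
    (x : EuclideanSpace ℝ (Fin m)) (z : EuclideanSpace ℝ (Fin n))
    (hmem : (x, z) ∈ Metric.ball p₀ (ρ / 2)) (hQ0 : Q₂ (x, z) = 0) :
    IsLocalMin (fun y => f (x, y)) z := by
  have hmem' : dist ((x, z) : EuclideanSpace ℝ (Fin m) × EuclideanSpace ℝ (Fin n)) p₀ < ρ/2 :=
    Metric.mem_ball.1 hmem
  have hρ2 : (0:ℝ) < ρ/2 := lt_of_le_of_lt dist_nonneg hmem'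
  have key : ∀ y, dist y z < ρ/2 → f (x, z) ≤ f (x, y) := by
    intro y hy
    set u := y - z with hudef
    have hun : ‖u‖ < ρ/2 := by rw [hudef, ← dist_eq_norm]; exact hy
    set γ : ℝ → EuclideanSpace ℝ (Fin m) × EuclideanSpace ℝ (Fin n) :=
      fun t => (x, z + t • u) with hγdef
    have hγmem : ∀ t ∈ Set.Icc (0:ℝ) 1, γ t ∈ Metric.ball p₀ ρ := by
      intro t ht
      have h1 : dist (γ t) (x, z) ≤ ‖u‖ := by
        have e : dist (γ t) ((x, z) : EuclideanSpace ℝ (Fin m) ×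
            EuclideanSpace ℝ (Fin n)) = max (dist x x) (dist (z + t • u) z) := Prod.dist_eq
        rw [e]
        have e2 : dist (z + t • u) z = |t| * ‖u‖ := by
          rw [dist_eq_norm, add_sub_cancel_left, norm_smul, Real.norm_eq_abs]
        have e3 : |t| ≤ 1 := abs_le.2 ⟨by linarith [ht.1], ht.2⟩
        have e4 : |t| * ‖u‖ ≤ 1 * ‖u‖ := mul_le_mul_of_nonneg_right e3 (norm_nonneg u)
        rw [dist_self, e2]
        exact max_le (norm_nonneg u) (by linarith)
      have h2 : dist (γ t) p₀ ≤ dist (γ t) (x, z) + dist (x, z) p₀ := dist_triangle _ _ _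
      have : dist (γ t) p₀ < ρ := by linarith
      exact Metric.mem_ball.2 this
    have hγd : ∀ t : ℝ, HasDerivAt γ ((0 : EuclideanSpace ℝ (Fin m)), u) t := by
      intro t
      have h1 : HasDerivAt (fun s : ℝ => z + s • u) u t := by
        simpa using ((hasDerivAt_id t).smul_const u).const_add z
      exact (hasDerivAt_const t x).prodMk h1
    have hfd' : ∀ t ∈ Set.Icc (0:ℝ) 1,
        HasDerivAt (fun s => f (γ s)) ⟪Q₂ (γ t), u⟫ t := by
      intro t ht
      have h1 : HasDerivAt (fun s => f (γ s)) (Df (γ t) ((0 : _), u)) t :=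
        (hDf _ (hγmem t ht)).comp_hasDerivAt t (hγd t)
      rw [hQf _ (hγmem t ht)]
      exact h1
    have hkd : ∀ t ∈ Set.Icc (0:ℝ) 1,
        HasDerivAt (fun s => ⟪Q₂ (γ s), u⟫) ⟪DQ (γ t) ((0:_), u), u⟫ t := by
      intro t ht
      have h1 : HasDerivAt (fun s => Q₂ (γ s)) (DQ (γ t) ((0:_), u)) t :=
        (hDQ _ (hγmem t ht)).comp_hasDerivAt t (hγd t)
      have h2 := HasDerivAt.inner ℝ h1 (hasDerivAt_const t u)
      simpa using h2
    have hkmono : MonotoneOn (fun s => ⟪Q₂ (γ s), u⟫) (Set.Icc 0 1) := by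
      apply monotoneOn_of_deriv_nonneg (convex_Icc 0 1)
      · exact fun t ht => (hkd t ht).continuousAt.continuousWithinAt
      · intro t ht
        rw [interior_Icc] at ht
        exact ((hkd t (Set.mem_Icc_of_Ioo ht)).differentiableAt).differentiableWithinAt
      · intro t ht
        rw [interior_Icc] at ht
        rw [(hkd t (Set.mem_Icc_of_Ioo ht)).deriv]
        have h3 : 0 ≤ ⟪u, DQ (γ t) ((0:_), u)⟫ :=
          hPSD _ (hγmem t (Set.mem_Icc_of_Ioo ht)) u
        rwa [real_inner_comm] at h3
    have hk0 : ⟪Q₂ (γ 0), u⟫ = 0 := by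
      have hγ0 : γ 0 = (x, z) := by rw [hγdef]; simp
      rw [hγ0, hQ0]
      simp
    have hknn : ∀ t ∈ Set.Icc (0:ℝ) 1, 0 ≤ ⟪Q₂ (γ t), u⟫ := by
      intro t ht
      have h := hkmono (Set.left_mem_Icc.2 zero_le_one) ht ht.1
      simp only at h
      rwa [hk0] at h
    have hhmono : MonotoneOn (fun s => f (γ s)) (Set.Icc 0 1) := by
      apply monotoneOn_of_deriv_nonneg (convex_Icc 0 1)
      · exact fun t ht => (hfd' t ht).continuousAt.continuousWithinAt
      · intro t ht
        rw [interior_Icc] at ht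
        exact ((hfd' t (Set.mem_Icc_of_Ioo ht)).differentiableAt).differentiableWithinAt
      · intro t ht
        rw [interior_Icc] at ht
        rw [(hfd' t (Set.mem_Icc_of_Ioo ht)).deriv]
        exact hknn t (Set.mem_Icc_of_Ioo ht)
    have h01 := hhmono (Set.left_mem_Icc.2 zero_le_one)
      (Set.right_mem_Icc.2 zero_le_one) zero_le_one
    have hg0 : γ 0 = (x, z) := by rw [hγdef]; simp
    have hg1 : γ 1 = (x, y) := by rw [hγdef]; simp [hudef]
    simpa [hg0, hg1] using h01
  have hev : ∀ᶠ y in nhds z, f (x, z) ≤ f (x, y) :=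
    Metric.eventually_nhds_iff_ball.2
      ⟨ρ/2, hρ2, fun y hy => key y (Metric.mem_ball.1 hy)⟩
  exact hev


set_option maxHeartbeats 4000000 in
/-- Gradient of the interpretation loss `G(x) = ½‖g(x) − g₀‖²`
of the local-minimizer map `g` of `f(x, ·)`, at `x₀`, equals
`−A*(B⁻¹(g(x₀) − g₀))` where `A = ∂ₓQ(x₀,y₀)`, `B = ∇ᵧ²f(x₀,y₀)` and
`Q(x,y) = ∇ᵧ f(x,y)`. -/
theorem adv2_mask_gradient {m n : ℕ}
    (f : EuclideanSpace ℝ (Fin m) × EuclideanSpace ℝ (Fin n) → ℝ)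
    (x₀ : EuclideanSpace ℝ (Fin m)) (y₀ : EuclideanSpace ℝ (Fin n))
    (Nx : Set (EuclideanSpace ℝ (Fin m))) (Ny : Set (EuclideanSpace ℝ (Fin n)))
    (hNx : Nx ∈ nhds x₀) (hNy : Ny ∈ nhds y₀)
    (hf : ContDiffOn ℝ 2 f (Nx ×ˢ Ny))
    (Q : EuclideanSpace ℝ (Fin m) → EuclideanSpace ℝ (Fin n) → EuclideanSpace ℝ (Fin n))
    (hQ : ∀ x y, Q x y = gradient (fun y' => f (x, y')) y)
    (g : EuclideanSpace ℝ (Fin m) → EuclideanSpace ℝ (Fin n))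
    -- (C1): for each x ∈ Nx, g x is the unique local minimizer of f(x, ·) in Ny
    (hg_mem : ∀ x ∈ Nx, g x ∈ Ny)
    (hg_min : ∀ x ∈ Nx, IsLocalMin (fun y => f (x, y)) (g x))
    (hg_uniq : ∀ x ∈ Nx, ∀ y ∈ Ny, IsLocalMin (fun y' => f (x, y')) y → y = g x)
    -- (C2): y₀ is the local minimizer of f(x₀, ·)
    (hgx₀ : g x₀ = y₀)
    -- (C3): the Hessian B = ∇ᵧ²f(x₀,y₀), i.e. the derivative of Q(x₀,·) at y₀,
    -- is positive definite (hence non-degenerate), with inverse Binv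
    (B : EuclideanSpace ℝ (Fin n) →L[ℝ] EuclideanSpace ℝ (Fin n))
    (hB : HasFDerivAt (Q x₀) B y₀)
    (hBpos : ∀ v : EuclideanSpace ℝ (Fin n), v ≠ 0 → 0 < ⟪v, B v⟫)
    (Binv : EuclideanSpace ℝ (Fin n) →L[ℝ] EuclideanSpace ℝ (Fin n))
    (hBinv₁ : Binv.comp B = ContinuousLinearMap.id ℝ _)
    (hBinv₂ : B.comp Binv = ContinuousLinearMap.id ℝ _)
    -- A = ∂ₓQ(x₀, y₀)
    (A : EuclideanSpace ℝ (Fin m) →L[ℝ] EuclideanSpace ℝ (Fin n))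
    (hA : HasFDerivAt (fun x => Q x y₀) A x₀)
    (g₀ : EuclideanSpace ℝ (Fin n)) :
    HasGradientAt (fun x => (1 / 2 : ℝ) * ‖g x - g₀‖ ^ 2)
      (-(ContinuousLinearMap.adjoint A (Binv (g x₀ - g₀)))) x₀ := by
  classical
  set p₀ : EuclideanSpace ℝ (Fin m) × EuclideanSpace ℝ (Fin n) := (x₀, y₀) with hp₀def
  set U : Set (EuclideanSpace ℝ (Fin m) × EuclideanSpace ℝ (Fin n)) :=
    interior Nx ×ˢ interior Ny with hUdef
  have hUopen : IsOpen U := isOpen_interior.prod isOpen_interior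
  have hp₀U : p₀ ∈ U :=
    ⟨mem_interior_iff_mem_nhds.2 hNx, mem_interior_iff_mem_nhds.2 hNy⟩
  have hUsub : U ⊆ Nx ×ˢ Ny := Set.prod_mono interior_subset interior_subset
  have hfU : ContDiffOn ℝ 2 f U := hf.mono hUsub
  have hUnhds : U ∈ nhds p₀ := hUopen.mem_nhds hp₀U
  have hfdiff : ∀ p ∈ U, DifferentiableAt ℝ f p := fun p hp =>
    (hfU.differentiableOn (by norm_num)).differentiableAt (hUopen.mem_nhds hp)
  have hDf : ContDiffOn ℝ 1 (fderiv ℝ f) U :=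
    hfU.fderiv_of_isOpen hUopen (by norm_num)
  set inr2 := ContinuousLinearMap.inr ℝ (EuclideanSpace ℝ (Fin m))
    (EuclideanSpace ℝ (Fin n)) with hinr2def
  set inl2 := ContinuousLinearMap.inl ℝ (EuclideanSpace ℝ (Fin m))
    (EuclideanSpace ℝ (Fin n)) with hinl2def
  have hpart : ∀ p ∈ U,
      HasFDerivAt (fun y => f (p.1, y)) ((fderiv ℝ f p).comp inr2) p.2 := by
    intro p hp
    exact ((hfdiff p hp).hasFDerivAt).comp p.2 (hasFDerivAt_prodMk_right p.1 p.2)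
  set J := dualIso (EuclideanSpace ℝ (Fin n)) with hJdef
  set Q₂ : EuclideanSpace ℝ (Fin m) × EuclideanSpace ℝ (Fin n) →
      EuclideanSpace ℝ (Fin n) := fun p => J ((fderiv ℝ f p).comp inr2) with hQ₂def
  have hQeq : ∀ p ∈ U, Q p.1 p.2 = Q₂ p := by
    intro p hp
    rw [hQ]
    exact (hasFDerivAt_iff_hasGradientAt.1 (hpart p hp)).gradient
  have hQ₂cd : ContDiffOn ℝ 1 Q₂ U :=
    J.contDiff.comp_contDiffOn (hDf.clm_comp contDiffOn_const)
  have hQ₂diff : ∀ p ∈ U, DifferentiableAt ℝ Q₂ p := fun p hp =>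
    (hQ₂cd.differentiableOn one_ne_zero).differentiableAt (hUopen.mem_nhds hp)
  set C := fderiv ℝ Q₂ p₀ with hCdef
  have hCstrict : HasStrictFDerivAt Q₂ C p₀ :=
    (hQ₂cd.contDiffAt hUnhds).hasStrictFDerivAt one_ne_zero
  have hyU : ∀ᶠ y in nhds y₀, (x₀, y) ∈ U := by
    have hc : ContinuousAt (fun y : EuclideanSpace ℝ (Fin n) => (x₀, y)) y₀ :=
      (continuous_const.prodMk continuous_id).continuousAt
    exact hc.preimage_mem_nhds hUnhds
  have hxU : ∀ᶠ x in nhds x₀, (x, y₀) ∈ U := by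
    have hc : ContinuousAt (fun x : EuclideanSpace ℝ (Fin m) => (x, y₀)) x₀ :=
      (continuous_id.prodMk continuous_const).continuousAt
    exact hc.preimage_mem_nhds hUnhds
  have hBC : B = C.comp inr2 := by
    have h1 : HasFDerivAt (fun y => Q₂ (x₀, y)) (C.comp inr2) y₀ :=
      hCstrict.hasFDerivAt.comp y₀ (hasFDerivAt_prodMk_right x₀ y₀)
    have h2 : HasFDerivAt (Q x₀) (C.comp inr2) y₀ := by
      apply h1.congr_of_eventuallyEq
      filter_upwards [hyU] with y hy
      exact hQeq (x₀, y) hy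
    exact hB.unique h2
  have hAC : A = C.comp inl2 := by
    have h1 : HasFDerivAt (fun x => Q₂ (x, y₀)) (C.comp inl2) x₀ :=
      by have := hCstrict.hasFDerivAt.comp x₀ (hasFDerivAt_prodMk_left (𝕜 := ℝ) x₀ y₀ :
        HasFDerivAt (fun e => ((e, y₀) : EuclideanSpace ℝ (Fin m) × EuclideanSpace ℝ (Fin n))) inl2 x₀); exact this
    have h2 : HasFDerivAt (fun x => Q x y₀) (C.comp inl2) x₀ := by
      apply h1.congr_of_eventuallyEq
      filter_upwards [hxU] with x hx
      exact hQeq (x, y₀) hx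
    exact hA.unique h2
  have hminx₀ : IsLocalMin (fun y => f (x₀, y)) y₀ := by
    have := hg_min x₀ (mem_of_mem_nhds hNx)
    rwa [hgx₀] at this
  have hQ₂p₀ : Q₂ p₀ = 0 := by
    rw [← hQeq p₀ hp₀U]
    show Q x₀ y₀ = 0
    rw [hQ]
    unfold gradient
    rw [hminx₀.fderiv_eq_zero]
    exact map_zero _
  -- the linear equivalence `T` = derivative of `Φ : p ↦ (p.1, Q₂ p)`
  set fstL := ContinuousLinearMap.fst ℝ (EuclideanSpace ℝ (Fin m))
    (EuclideanSpace ℝ (Fin n)) with hfstLdef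
  set sndL := ContinuousLinearMap.snd ℝ (EuclideanSpace ℝ (Fin m))
    (EuclideanSpace ℝ (Fin n)) with hsndLdef
  have hCsplit : ∀ dp : EuclideanSpace ℝ (Fin m) × EuclideanSpace ℝ (Fin n),
      C dp = A dp.1 + B dp.2 := by
    intro dp
    have hdp : inl2 dp.1 + inr2 dp.2 = dp := by
      rw [hinl2def, hinr2def]
      simp
    rw [hAC, hBC]
    calc C dp = C (inl2 dp.1 + inr2 dp.2) := by rw [hdp]
      _ = C (inl2 dp.1) + C (inr2 dp.2) := map_add _ _ _
      _ = (C.comp inl2) dp.1 + (C.comp inr2) dp.2 := rfl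
  have hBiBa : ∀ w, Binv (B w) = w := by
    intro w
    have := congrArg (fun (L : EuclideanSpace ℝ (Fin n) →L[ℝ] EuclideanSpace ℝ (Fin n)) => L w) hBinv₁
    simpa using this
  have hBBia : ∀ w, B (Binv w) = w := by
    intro w
    have := congrArg (fun (L : EuclideanSpace ℝ (Fin n) →L[ℝ] EuclideanSpace ℝ (Fin n)) => L w) hBinv₂
    simpa using this
  set T₁ := fstL.prod C with hT₁def
  set T₂ := fstL.prod (Binv.comp (sndL - A.comp fstL)) with hT₂def
  have hT21 : Function.LeftInverse T₂ T₁ := by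
    intro p
    show ((T₁ p).1, Binv ((T₁ p).2 - A (T₁ p).1)) = p
    show (p.1, Binv (C p - A p.1)) = p
    rw [hCsplit]
    simp [hBiBa]
  have hT12 : Function.RightInverse T₂ T₁ := by
    intro q
    show ((T₂ q).1, C (T₂ q)) = q
    have h1 : T₂ q = (q.1, Binv (q.2 - A q.1)) := rfl
    rw [h1, hCsplit]
    simp [hBBia]
  set T := ContinuousLinearEquiv.equivOfInverse T₁ T₂ hT21 hT12 with hTdef
  set Φ : EuclideanSpace ℝ (Fin m) × EuclideanSpace ℝ (Fin n) →
      EuclideanSpace ℝ (Fin m) × EuclideanSpace ℝ (Fin n) :=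
    fun p => (p.1, Q₂ p) with hΦdef
  have hΦ : HasStrictFDerivAt Φ
      (T : EuclideanSpace ℝ (Fin m) × EuclideanSpace ℝ (Fin n) →L[ℝ]
        EuclideanSpace ℝ (Fin m) × EuclideanSpace ℝ (Fin n)) p₀ := by
    have h1 : HasStrictFDerivAt (fun p : EuclideanSpace ℝ (Fin m) ×
        EuclideanSpace ℝ (Fin n) => p.1) fstL p₀ := fstL.hasStrictFDerivAt
    exact h1.prodMk hCstrict
  set inv := hΦ.localInverse Φ T p₀ with hinvdef
  have hinvp₀ : inv (Φ p₀) = p₀ := hΦ.localInverse_apply_image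
  have hΦp₀ : Φ p₀ = (x₀, 0) := by
    show (p₀.1, Q₂ p₀) = (x₀, 0)
    rw [hQ₂p₀]
  have hinv_strict : HasStrictFDerivAt inv
      ((T.symm : EuclideanSpace ℝ (Fin m) × EuclideanSpace ℝ (Fin n) →L[ℝ]
        EuclideanSpace ℝ (Fin m) × EuclideanSpace ℝ (Fin n))) (Φ p₀) :=
    hΦ.to_localInverse
  have hri : ∀ᶠ q in nhds (Φ p₀), Φ (inv q) = q := hΦ.eventually_right_inverse
  set jm : EuclideanSpace ℝ (Fin m) →
      EuclideanSpace ℝ (Fin m) × EuclideanSpace ℝ (Fin n) :=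
    fun x => (x, 0) with hjdef
  have hjcont : Continuous jm := continuous_id.prodMk continuous_const
  have hjtend : Filter.Tendsto jm (nhds x₀) (nhds (Φ p₀)) := by
    rw [hΦp₀]
    exact hjcont.continuousAt
  have hev1 : ∀ᶠ x in nhds x₀, Φ (inv (jm x)) = jm x := hjtend.eventually hri
  set φ : EuclideanSpace ℝ (Fin m) → EuclideanSpace ℝ (Fin n) :=
    fun x => (inv (jm x)).2 with hφdef
  have hφx₀ : inv (jm x₀) = p₀ := by
    have : jm x₀ = Φ p₀ := hΦp₀.symm
    rw [this]
    exact hinvp₀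
  have hev2 : ∀ᶠ x in nhds x₀, inv (jm x) = (x, φ x) ∧ Q₂ (x, φ x) = 0 := by
    filter_upwards [hev1] with x hx
    have h1 : (inv (jm x)).1 = x := congrArg Prod.fst hx
    have heq : inv (jm x) = (x, φ x) := by
      rw [hφdef]
      exact Prod.ext h1 rfl
    refine ⟨heq, ?_⟩
    have h2 : Q₂ (inv (jm x)) = (0 : EuclideanSpace ℝ (Fin n)) := congrArg Prod.snd hx
    rwa [heq] at h2
  have hinvcont : Filter.Tendsto (fun x => inv (jm x)) (nhds x₀) (nhds p₀) := by
    have h1 : Filter.Tendsto inv (nhds (Φ p₀)) (nhds p₀) := by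
      have h : Filter.Tendsto inv (nhds (Φ p₀)) (nhds (inv (Φ p₀))) :=
        hΦ.localInverse_continuousAt
      rwa [hinvp₀] at h
    exact h1.comp hjtend
  -- derivative of φ
  have hφder : HasFDerivAt φ (-(Binv.comp A)) x₀ := by
    have hjd : HasStrictFDerivAt jm inl2 x₀ := inl2.hasStrictFDerivAt
    have hinv_strict' : HasStrictFDerivAt inv
        ((T.symm : EuclideanSpace ℝ (Fin m) × EuclideanSpace ℝ (Fin n) →L[ℝ]
          EuclideanSpace ℝ (Fin m) × EuclideanSpace ℝ (Fin n))) (jm x₀) := by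
      have : jm x₀ = Φ p₀ := hΦp₀.symm
      rw [this]
      exact hinv_strict
    have h1 : HasStrictFDerivAt (fun x => inv (jm x))
        ((T.symm : EuclideanSpace ℝ (Fin m) × EuclideanSpace ℝ (Fin n) →L[ℝ]
          EuclideanSpace ℝ (Fin m) × EuclideanSpace ℝ (Fin n)).comp inl2) x₀ :=
      hinv_strict'.comp x₀ hjd
    have h2 : HasStrictFDerivAt (fun p : EuclideanSpace ℝ (Fin m) ×
        EuclideanSpace ℝ (Fin n) => p.2) sndL (inv (jm x₀)) := sndL.hasStrictFDerivAt
    have h3 : HasStrictFDerivAt φ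
        (sndL.comp (((T.symm : EuclideanSpace ℝ (Fin m) × EuclideanSpace ℝ (Fin n) →L[ℝ]
          EuclideanSpace ℝ (Fin m) × EuclideanSpace ℝ (Fin n))).comp inl2)) x₀ :=
      h2.comp x₀ h1
    have h4 : sndL.comp (((T.symm : EuclideanSpace ℝ (Fin m) × EuclideanSpace ℝ (Fin n) →L[ℝ]
          EuclideanSpace ℝ (Fin m) × EuclideanSpace ℝ (Fin n))).comp inl2)
        = -(Binv.comp A) := by
      have hTsymm : (T.symm : EuclideanSpace ℝ (Fin m) × EuclideanSpace ℝ (Fin n) →L[ℝ]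
          EuclideanSpace ℝ (Fin m) × EuclideanSpace ℝ (Fin n)) = T₂ := rfl
      rw [hTsymm]
      refine ContinuousLinearMap.ext fun v => ?_
      show (T₂ (inl2 v)).2 = -(Binv (A v))
      have : inl2 v = (v, 0) := rfl
      rw [this]
      show Binv ((sndL - A.comp fstL) (v, 0)) = -(Binv (A v))
      simp [hsndLdef, hfstLdef]
    rw [h4] at h3
    exact h3.hasFDerivAt
  -- positive semidefiniteness of the Hessian in a ball
  obtain ⟨c, hc, hcoer⟩ := coercive B hBpos
  set G₂ : EuclideanSpace ℝ (Fin m) × EuclideanSpace ℝ (Fin n) →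
      (EuclideanSpace ℝ (Fin n) →L[ℝ] EuclideanSpace ℝ (Fin n)) :=
    fun p => (fderiv ℝ Q₂ p).comp inr2 with hG₂def
  have hfQ₂c : ContinuousOn (fderiv ℝ Q₂) U :=
    hQ₂cd.continuousOn_fderiv_of_isOpen hUopen le_rfl
  have hG₂cont : ContinuousAt G₂ p₀ := by
    have h1 : ContinuousAt (fderiv ℝ Q₂) p₀ := hfQ₂c.continuousAt hUnhds
    have h2 : Continuous (fun L : EuclideanSpace ℝ (Fin m) × EuclideanSpace ℝ (Fin n) →L[ℝ]
        EuclideanSpace ℝ (Fin n) => L.comp inr2) :=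
      ((ContinuousLinearMap.compL ℝ (EuclideanSpace ℝ (Fin n))
        (EuclideanSpace ℝ (Fin m) × EuclideanSpace ℝ (Fin n))
        (EuclideanSpace ℝ (Fin n))).flip inr2).continuous
    exact h2.continuousAt.comp h1
  have hG₂p₀ : G₂ p₀ = B := hBC.symm
  have hnear : ∀ᶠ p in nhds p₀, ‖G₂ p - B‖ < c := by
    have h1 : ContinuousAt (fun p => ‖G₂ p - B‖) p₀ :=
      (hG₂cont.sub continuousAt_const).norm
    have h0 : ‖G₂ p₀ - B‖ < c := by
      rw [hG₂p₀, sub_self, norm_zero]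
      exact hc
    exact h1.eventually_lt continuousAt_const h0
  have hpos_nhd : ∀ᶠ p in nhds p₀, p ∈ U ∧
      ∀ v : EuclideanSpace ℝ (Fin n), 0 ≤ ⟪v, (G₂ p) v⟫ := by
    filter_upwards [hnear, hUnhds] with p h1 h2
    exact ⟨h2, psd_perturb B (G₂ p) hcoer h1.le⟩
  obtain ⟨ρ, hρ, hballsub⟩ := Metric.eventually_nhds_iff_ball.1 hpos_nhd
  -- g agrees with φ near x₀
  have hball2 : ∀ᶠ x in nhds x₀, inv (jm x) ∈ Metric.ball p₀ (ρ/2) :=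
    hinvcont (Metric.ball_mem_nhds p₀ (by positivity))
  have hgφ : g =ᶠ[nhds x₀] φ := by
    filter_upwards [hev2, hball2, hNx] with x h2 hb hx
    obtain ⟨heq, hQ0⟩ := h2
    rw [heq] at hb
    have hballρ : ((x, φ x) : EuclideanSpace ℝ (Fin m) × EuclideanSpace ℝ (Fin n)) ∈
        Metric.ball p₀ ρ := Metric.ball_subset_ball (by linarith) hb
    have hUmem : ((x, φ x) : EuclideanSpace ℝ (Fin m) × EuclideanSpace ℝ (Fin n)) ∈ U :=
      (hballsub _ hballρ).1
    have hφNy : φ x ∈ Ny := (hUsub hUmem).2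
    have hmin : IsLocalMin (fun y => f (x, y)) (φ x) := by
      apply secondOrderMin f Q₂ (fun p => fderiv ℝ f p) (fun p => fderiv ℝ Q₂ p) p₀ ρ
        ?_ ?_ ?_ ?_ x (φ x) hb hQ0
      · intro p hp
        exact (hfdiff p (hballsub p hp).1).hasFDerivAt
      · intro p hp v
        have h5 : Q₂ p = J ((fderiv ℝ f p).comp inr2) := rfl
        rw [h5, dualIso_inner]
        rfl
      · intro p hp
        exact (hQ₂diff p (hballsub p hp).1).hasFDerivAt
      · intro p hp v
        exact (hballsub p hp).2 v
    exact (hg_uniq x hx (φ x) hφNy hmin).symm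
  have hgder : HasFDerivAt g (-(Binv.comp A)) x₀ :=
    hφder.congr_of_eventuallyEq hgφ
  -- symmetry of B
  have hBsym : ∀ u v : EuclideanSpace ℝ (Fin n), ⟪B u, v⟫ = ⟪u, B v⟫ := by
    have h1 : HasFDerivAt (fun y => Q₂ (x₀, y)) (C.comp inr2) y₀ :=
      hCstrict.hasFDerivAt.comp y₀ (hasFDerivAt_prodMk_right x₀ y₀)
    have h2 : HasFDerivAt (fun y => (J.symm (Q₂ (x₀, y)) :
        EuclideanSpace ℝ (Fin n) →L[ℝ] ℝ))
        (((J.symm : EuclideanSpace ℝ (Fin n) ≃L[ℝ]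
          (EuclideanSpace ℝ (Fin n) →L[ℝ] ℝ)) : EuclideanSpace ℝ (Fin n) →L[ℝ]
          (EuclideanSpace ℝ (Fin n) →L[ℝ] ℝ)).comp (C.comp inr2)) y₀ :=
      (((J.symm : EuclideanSpace ℝ (Fin n) ≃L[ℝ]
          (EuclideanSpace ℝ (Fin n) →L[ℝ] ℝ)) : EuclideanSpace ℝ (Fin n) →L[ℝ]
          (EuclideanSpace ℝ (Fin n) →L[ℝ] ℝ)).hasFDerivAt).comp y₀ h1
    have hf'ev : ∀ᶠ y in nhds y₀, HasFDerivAt (fun y' => f (x₀, y'))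
        ((fun y => (J.symm (Q₂ (x₀, y)) : EuclideanSpace ℝ (Fin n) →L[ℝ] ℝ)) y) y := by
      filter_upwards [hyU] with y hy
      have h3 : (J.symm (Q₂ (x₀, y)) : EuclideanSpace ℝ (Fin n) →L[ℝ] ℝ)
          = (fderiv ℝ f (x₀, y)).comp inr2 := by
        have h4 : Q₂ (x₀, y) = J ((fderiv ℝ f (x₀, y)).comp inr2) := rfl
        rw [h4]
        exact J.symm_apply_apply _
      rw [h3]
      exact hpart (x₀, y) hy
    have hsym := second_derivative_symmetric_of_eventually_of_real hf'ev h2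
    intro u v
    have h5 : ∀ a b : EuclideanSpace ℝ (Fin n),
        ((((J.symm : EuclideanSpace ℝ (Fin n) ≃L[ℝ]
          (EuclideanSpace ℝ (Fin n) →L[ℝ] ℝ)) : EuclideanSpace ℝ (Fin n) →L[ℝ]
          (EuclideanSpace ℝ (Fin n) →L[ℝ] ℝ)).comp (C.comp inr2)) a) b
          = ⟪(C.comp inr2) a, b⟫ := fun a b => rfl
    rw [hBC]
    calc ⟪(C.comp inr2) u, v⟫ = _ := (h5 u v).symm
      _ = _ := hsym u v
      _ = ⟪(C.comp inr2) v, u⟫ := h5 v u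
      _ = ⟪u, (C.comp inr2) v⟫ := real_inner_comm _ _
  have hBinvsym : ∀ u v : EuclideanSpace ℝ (Fin n), ⟪Binv u, v⟫ = ⟪u, Binv v⟫ := by
    intro u v
    calc ⟪Binv u, v⟫ = ⟪Binv u, B (Binv v)⟫ := by rw [hBBia]
      _ = ⟪B (Binv u), Binv v⟫ := (hBsym _ _).symm
      _ = ⟪u, Binv v⟫ := by rw [hBBia]
  -- final assembly
  have h1 : HasFDerivAt (fun x => g x - g₀) (-(Binv.comp A)) x₀ := hgder.sub_const g₀
  have h2 := h1.inner ℝ h1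
  have h3 := h2.const_mul (1/2 : ℝ)
  have h4 : (fun x => (1/2 : ℝ) * ⟪g x - g₀, g x - g₀⟫)
      = (fun x => (1/2 : ℝ) * ‖g x - g₀‖ ^ 2) := by
    funext x'
    rw [real_inner_self_eq_norm_sq]
  rw [h4] at h3
  apply hasGradientAt_iff_hasFDerivAt.2
  have h6 : (InnerProductSpace.toDual ℝ (EuclideanSpace ℝ (Fin m)))
      (-(ContinuousLinearMap.adjoint A (Binv (g x₀ - g₀))))
      = (1/2 : ℝ) • ((fderivInnerCLM ℝ (g x₀ - g₀, g x₀ - g₀)).comp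
        ((-(Binv.comp A)).prod (-(Binv.comp A)))) := by
    refine ContinuousLinearMap.ext fun v => ?_
    rw [InnerProductSpace.toDual_apply_apply]
    have hR : ((1/2 : ℝ) • ((fderivInnerCLM ℝ (g x₀ - g₀, g x₀ - g₀)).comp
        ((-(Binv.comp A)).prod (-(Binv.comp A))))) v
        = (1/2 : ℝ) * (⟪g x₀ - g₀, -(Binv (A v))⟫ + ⟪-(Binv (A v)), g x₀ - g₀⟫) := rfl
    rw [hR]
    have hx1 : ⟪g x₀ - g₀, -(Binv (A v))⟫ = -⟪Binv (g x₀ - g₀), A v⟫ := by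
      rw [inner_neg_right, ← hBinvsym]
    have hx3 : ⟪-(Binv (A v)), g x₀ - g₀⟫ = -⟪Binv (g x₀ - g₀), A v⟫ := by
      rw [real_inner_comm]
      exact hx1
    have hx2 : ⟪-(ContinuousLinearMap.adjoint A (Binv (g x₀ - g₀))), v⟫
        = -⟪Binv (g x₀ - g₀), A v⟫ := by
      rw [inner_neg_left, ContinuousLinearMap.adjoint_inner_left]
    rw [hx2, hx1, hx3]
    ring
  rw [h6]
  exact h3
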